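/- Identification of the marginal controlled direct effect (Theorem 3.6, MCDE, d = 1): for every (p₀,p₁) ∈ (0,1)², the iterated mixed second partial derivative ∂²G¹/∂p∂q exists at (p₀,p₁) and equals (φ^{11}(p₀,p₁) − φ^{01}(p₀,p₁))·c(p₀,p₁); consequently the ratio (∂²G¹/∂p∂q)(p₀,p₁) / (∂²C/∂p∂q)(p₀,p₁) equals the marginal controlled direct effect MCDE^{(1)}(p₀,p₁) := φ^{11}(p₀,p₁) − φ^{01}(p₀,p₁). -/
import Mathlib


open MeasureTheory ProbabilityTheory

open Set

/-- Integrability of a bounded measurable function on a restricted finite product. -/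
lemma aux_int_prod (g : ℝ × ℝ → ℝ) (hgm : Measurable g) (M : ℝ)
    (hgb : ∀ x, |g x| ≤ M) (p q : ℝ) :
    Integrable g ((volume.restrict (Ioc (0:ℝ) p)).prod (volume.restrict (Ioc (0:ℝ) q))) := by
  haveI : IsFiniteMeasure (volume.restrict (Ioc (0:ℝ) p)) :=
    ⟨by rw [Measure.restrict_apply_univ, Real.volume_Ioc]; exact ENNReal.ofReal_lt_top⟩
  haveI : IsFiniteMeasure (volume.restrict (Ioc (0:ℝ) q)) :=
    ⟨by rw [Measure.restrict_apply_univ, Real.volume_Ioc]; exact ENNReal.ofReal_lt_top⟩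
  exact (integrable_const M).mono' hgm.aestronglyMeasurable
    (Filter.Eventually.of_forall fun x => by simpa [Real.norm_eq_abs] using hgb x)

/-- Derivative in `q` of `(p,q) ↦ ∫_{(0,p]×(0,q]} g` at an interior point `p₁`. -/
lemma aux_qderiv (g : ℝ × ℝ → ℝ) (hgm : Measurable g) (M : ℝ)
    (hgb : ∀ x, |g x| ≤ M)
    (hg0 : ∀ x : ℝ × ℝ, x ∉ Ioo (0:ℝ) 1 ×ˢ Ioo (0:ℝ) 1 → g x = 0)
    (hgc : ContinuousOn g (Ioo (0:ℝ) 1 ×ˢ Ioo (0:ℝ) 1))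
    (p₁ : ℝ) (hp₁ : p₁ ∈ Ioo (0:ℝ) 1) (p : ℝ) (hp : 0 ≤ p) :
    HasDerivAt (fun q => ∫ x in Ioc (0:ℝ) p ×ˢ Ioc (0:ℝ) q, g x)
      (∫ u in Ioc (0:ℝ) p, g (u, p₁)) p₁ := by
  haveI : IsFiniteMeasure (volume.restrict (Ioc (0:ℝ) p)) :=
    ⟨by rw [Measure.restrict_apply_univ, Real.volume_Ioc]; exact ENNReal.ofReal_lt_top⟩
  set H : ℝ → ℝ := fun q' => ∫ u in Ioc (0:ℝ) p, g (u, q') with hH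
  -- Fubini
  have fub : ∀ q : ℝ, (∫ x in Ioc (0:ℝ) p ×ˢ Ioc (0:ℝ) q, g x) = ∫ q' in Ioc (0:ℝ) q, H q' := by
    intro q
    rw [Measure.volume_eq_prod, ← Measure.prod_restrict]
    exact integral_prod_symm g (aux_int_prod g hgm M hgb p q)
  -- measurability of H
  have hHm : StronglyMeasurable H := by
    have : StronglyMeasurable (fun z : ℝ × ℝ => g (z.2, z.1)) :=
      (hgm.comp measurable_swap).stronglyMeasurable
    exact this.integral_prod_right'
  -- bound of H
  have hM : 0 ≤ M := le_trans (abs_nonneg _) (hgb ((1:ℝ),(1:ℝ)))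
  have hHb : ∀ q', ‖H q'‖ ≤ M * p := by
    intro q'
    have h1 : ‖∫ u in Ioc (0:ℝ) p, g (u, q')‖
        ≤ M * ((volume.restrict (Ioc (0:ℝ) p)) univ).toReal :=
      norm_integral_le_of_norm_le_const (Filter.Eventually.of_forall fun u => by
        rw [Real.norm_eq_abs]; exact hgb (u, q'))
    have h2 : ((volume.restrict (Ioc (0:ℝ) p)) univ).toReal ≤ p := by
      rw [Measure.restrict_apply_univ, Real.volume_Ioc,
        ENNReal.toReal_ofReal (by linarith : (0:ℝ) ≤ p - 0)]
      linarith
    exact le_trans h1 (mul_le_mul_of_nonneg_left h2 hM)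
  -- continuity of H at p₁
  have hHc : ContinuousAt H p₁ := by
    apply continuousAt_of_dominated (bound := fun _ => M)
    · exact Filter.Eventually.of_forall fun q' =>
        (hgm.comp (measurable_id.prodMk measurable_const)).aestronglyMeasurable
    · exact Filter.Eventually.of_forall fun q' =>
        Filter.Eventually.of_forall fun u => by simpa [Real.norm_eq_abs] using hgb (u, q')
    · exact integrable_const M
    · refine Filter.Eventually.of_forall fun u => ?_
      by_cases hu : u ∈ Ioo (0:ℝ) 1
      · have : ContinuousAt g (u, p₁) :=
          hgc.continuousAt ((isOpen_Ioo.prod isOpen_Ioo).mem_nhds ⟨hu, hp₁⟩)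
        exact this.comp ((continuous_const.prodMk continuous_id).continuousAt)
      · have : (fun q' => g (u, q')) = fun _ => 0 :=
          funext fun q' => hg0 (u, q') (by simp [Set.mem_prod, hu])
        rw [this]; exact continuousAt_const
  -- interval integrability of H
  have hHi : IntervalIntegrable H volume 0 p₁ := by
    haveI : IsFiniteMeasure (volume.restrict (Ioc (0:ℝ) p₁)) :=
      ⟨by rw [Measure.restrict_apply_univ, Real.volume_Ioc]; exact ENNReal.ofReal_lt_top⟩
    rw [intervalIntegrable_iff_integrableOn_Ioc_of_le hp₁.1.le]
    exact (integrable_const (M * p)).mono' hHm.aestronglyMeasurable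
      (Filter.Eventually.of_forall fun q' => hHb q')
  have ftc : HasDerivAt (fun q => ∫ q' in (0:ℝ)..q, H q') (H p₁) p₁ :=
    intervalIntegral.integral_hasDerivAt_right hHi
      hHm.stronglyMeasurableAtFilter hHc
  have heq : (fun q => ∫ x in Ioc (0:ℝ) p ×ˢ Ioc (0:ℝ) q, g x)
      =ᶠ[nhds p₁] (fun q => ∫ q' in (0:ℝ)..q, H q') := by
    filter_upwards [isOpen_Ioo.mem_nhds hp₁] with q hq
    rw [fub q, intervalIntegral.integral_of_le hq.1.le]
  exact ftc.congr_of_eventuallyEq heq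

/-- Derivative in `p` of `p ↦ ∫_0^p g(u,p₁) du` at an interior point. -/
lemma aux_pderiv (g : ℝ × ℝ → ℝ) (hgm : Measurable g) (M : ℝ)
    (hgb : ∀ x, |g x| ≤ M)
    (hgc : ContinuousOn g (Ioo (0:ℝ) 1 ×ˢ Ioo (0:ℝ) 1))
    (p₀ p₁ : ℝ) (hp₀ : p₀ ∈ Ioo (0:ℝ) 1) (hp₁ : p₁ ∈ Ioo (0:ℝ) 1) :
    HasDerivAt (fun p => ∫ u in (0:ℝ)..p, g (u, p₁)) (g (p₀, p₁)) p₀ := by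
  have hm1 : Measurable (fun u : ℝ => g (u, p₁)) :=
    hgm.comp (measurable_id.prodMk measurable_const)
  have hint : IntervalIntegrable (fun u : ℝ => g (u, p₁)) volume 0 p₀ := by
    haveI : IsFiniteMeasure (volume.restrict (Ioc (0:ℝ) p₀)) :=
      ⟨by rw [Measure.restrict_apply_univ, Real.volume_Ioc]; exact ENNReal.ofReal_lt_top⟩
    rw [intervalIntegrable_iff_integrableOn_Ioc_of_le hp₀.1.le]
    exact (integrable_const M).mono' hm1.aestronglyMeasurable
      (Filter.Eventually.of_forall fun u => by simpa [Real.norm_eq_abs] using hgb (u, p₁))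
  have hcont : ContinuousAt (fun u : ℝ => g (u, p₁)) p₀ := by
    have : ContinuousAt g (p₀, p₁) :=
      hgc.continuousAt ((isOpen_Ioo.prod isOpen_Ioo).mem_nhds ⟨hp₀, hp₁⟩)
    have hf : ContinuousAt (fun u : ℝ => (u, p₁)) p₀ :=
      (continuous_id.prodMk continuous_const).continuousAt
    exact ContinuousAt.comp (g := g) (f := fun u : ℝ => (u, p₁)) (x := p₀) this hf
  exact intervalIntegral.integral_hasDerivAt_right hint
    hm1.stronglyMeasurable.stronglyMeasurableAtFilter hcont

/-- Measurability of a function continuous on the open unit square and vanishing outside. -/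
lemma aux_meas_of_sq (g : ℝ × ℝ → ℝ)
    (hg0 : ∀ x : ℝ × ℝ, x ∉ Ioo (0:ℝ) 1 ×ˢ Ioo (0:ℝ) 1 → g x = 0)
    (hgc : ContinuousOn g (Ioo (0:ℝ) 1 ×ˢ Ioo (0:ℝ) 1)) : Measurable g := by
  classical
  have : g = (Ioo (0:ℝ) 1 ×ˢ Ioo (0:ℝ) 1).piecewise g (fun _ => 0) := by
    funext x
    by_cases hx : x ∈ Ioo (0:ℝ) 1 ×ˢ Ioo (0:ℝ) 1
    · simp [Set.piecewise, hx]
    · simp [Set.piecewise, hx, hg0 x hx]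
  rw [this]
  exact ContinuousOn.measurable_piecewise hgc continuousOn_const
    ((isOpen_Ioo.prod isOpen_Ioo).measurableSet)

/-- Identification of the marginal controlled spillover effect (Theorem 3.6, MCDE, d = 1):
for every `(p₀,p₁) ∈ (0,1)²` the iterated mixed second partial derivative of `G¹` exists and
equals `(φ¹¹ − φ⁰¹)·c`, the one of the copula `C` exists and equals `c > 0`, and their ratio
equals the marginal controlled direct effect `MCDE¹(p₀,p₁) = φ¹¹(p₀,p₁) − φ⁰¹(p₀,p₁)`. -/
theorem mcde_identification
    {Ω 𝒰 : Type*} [MeasurableSpace Ω] [MeasurableSpace 𝒰]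
    (μ : Measure Ω) [IsProbabilityMeasure μ]
    (U : Ω → 𝒰) (V₀ V₁ : Ω → ℝ)
    (hU : Measurable U) (hV₀ : Measurable V₀) (hV₁ : Measurable V₁)
    -- V₀, V₁ uniformly distributed on (0,1)
    (hV₀unif : Measure.map V₀ μ = volume.restrict (Set.Ioo (0:ℝ) 1))
    (hV₁unif : Measure.map V₁ μ = volume.restrict (Set.Ioo (0:ℝ) 1))
    -- bounded measurable outcome function (`true` codes treatment 1, `false` codes 0)
    (m : Bool → Bool → 𝒰 → ℝ) (hm : ∀ d d', Measurable (m d d'))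
    (hm_bdd : ∃ B, ∀ d d' u, |m d d' u| ≤ B)
    -- the joint law of (V₀,V₁) has density c w.r.t. 2-dimensional Lebesgue measure,
    -- concentrated on (0,1)², continuous, bounded above and away from zero there
    (c : ℝ × ℝ → ℝ) (hc_meas : Measurable c) (hc_nonneg : ∀ x, 0 ≤ c x)
    (hc_density : Measure.map (fun ω => (V₀ ω, V₁ ω)) μ
      = volume.withDensity fun x => ENNReal.ofReal (c x))
    (hc_supp : ∀ x : ℝ × ℝ, x ∉ Set.Ioo (0:ℝ) 1 ×ˢ Set.Ioo (0:ℝ) 1 → c x = 0)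
    (hc_cont : ContinuousOn c (Set.Ioo (0:ℝ) 1 ×ˢ Set.Ioo (0:ℝ) 1))
    (hc_bdd : ∃ B, ∀ x ∈ Set.Ioo (0:ℝ) 1 ×ˢ Set.Ioo (0:ℝ) 1, c x ≤ B)
    (hc_pos : ∃ ε > (0:ℝ), ∀ x ∈ Set.Ioo (0:ℝ) 1 ×ˢ Set.Ioo (0:ℝ) 1, ε ≤ c x)
    -- continuous bounded marginal treatment response functions φ^{dd'}
    (φ : Bool → Bool → ℝ × ℝ → ℝ)
    (hφ_cont : ∀ d d', ContinuousOn (φ d d') (Set.Ioo (0:ℝ) 1 ×ˢ Set.Ioo (0:ℝ) 1))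
    (hφ_bdd : ∃ B, ∀ d d' x, |φ d d' x| ≤ B)
    (hφ_disint : ∀ d d', ∀ p ∈ Set.Ioc (0:ℝ) 1, ∀ q ∈ Set.Ioc (0:ℝ) 1,
      (∫ ω, m d d' (U ω) * (if V₀ ω ≤ p then (1:ℝ) else 0)
        * (if V₁ ω ≤ q then (1:ℝ) else 0) ∂μ)
      = ∫ x in Set.Ioc (0:ℝ) p ×ˢ Set.Ioc (0:ℝ) q, φ d d' x * c x)
    -- the copula of (V₀, V₁)
    (C : ℝ → ℝ → ℝ)
    (hC : ∀ p q, C p q = (μ {ω | V₀ ω ≤ p ∧ V₁ ω ≤ q}).toReal)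
    -- identified conditional-mean function G¹
    (G1 : ℝ → ℝ → ℝ)
    (hG1 : ∀ p q, G1 p q =
      (∫ ω, m true true (U ω) * (if V₀ ω ≤ p then (1:ℝ) else 0)
        * (if V₁ ω ≤ q then (1:ℝ) else 0) ∂μ)
      + ∫ ω, m false true (U ω) * (if p < V₀ ω then (1:ℝ) else 0)
        * (if V₁ ω ≤ q then (1:ℝ) else 0) ∂μ)
    -- the evaluation point
    (p₀ p₁ : ℝ) (hp₀ : p₀ ∈ Set.Ioo (0:ℝ) 1) (hp₁ : p₁ ∈ Set.Ioo (0:ℝ) 1) :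
    ∃ A B : ℝ,
      -- the iterated mixed second partial derivative of G¹ at (p₀,p₁) exists and equals A
      (∃ DGq : ℝ → ℝ,
        (∀ᶠ p in nhds p₀, HasDerivAt (fun q => G1 p q) (DGq p) p₁) ∧
        HasDerivAt DGq A p₀) ∧
      -- the iterated mixed second partial derivative of C at (p₀,p₁) exists and equals B
      (∃ DCq : ℝ → ℝ,
        (∀ᶠ p in nhds p₀, HasDerivAt (fun q => C p q) (DCq p) p₁) ∧
        HasDerivAt DCq B p₀) ∧
      A = (φ true true (p₀, p₁) - φ false true (p₀, p₁)) * c (p₀, p₁) ∧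
      B = c (p₀, p₁) ∧ 0 < B ∧
      A / B = φ true true (p₀, p₁) - φ false true (p₀, p₁) := by
  obtain ⟨Bφ, hBφ⟩ := hφ_bdd
  obtain ⟨Bm, hBm⟩ := hm_bdd
  obtain ⟨Bc, hBc⟩ := hc_bdd
  obtain ⟨ε, hε, hεle⟩ := hc_pos
  have hBφ0 : 0 ≤ Bφ := le_trans (abs_nonneg _) (hBφ true true (0, 0))
  -- global bound for c
  have hcB : ∀ x, |c x| ≤ max Bc 0 := by
    intro x
    by_cases hx : x ∈ Ioo (0:ℝ) 1 ×ˢ Ioo (0:ℝ) 1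
    · rw [abs_of_nonneg (hc_nonneg x)]; exact le_trans (hBc x hx) (le_max_left _ _)
    · rw [hc_supp x hx]; simp
  -- properties of x ↦ φ d d' x * c x
  have hf0 : ∀ (d d' : Bool) (x : ℝ × ℝ), x ∉ Ioo (0:ℝ) 1 ×ˢ Ioo (0:ℝ) 1 →
      φ d d' x * c x = 0 := fun d d' x hx => by rw [hc_supp x hx, mul_zero]
  have hfc : ∀ d d' : Bool, ContinuousOn (fun x => φ d d' x * c x)
      (Ioo (0:ℝ) 1 ×ˢ Ioo (0:ℝ) 1) := fun d d' => (hφ_cont d d').mul hc_cont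
  have hfm : ∀ d d' : Bool, Measurable (fun x => φ d d' x * c x) := fun d d' =>
    aux_meas_of_sq _ (hf0 d d') (hfc d d')
  have hfb : ∀ (d d' : Bool) (x : ℝ × ℝ), |φ d d' x * c x| ≤ Bφ * max Bc 0 := by
    intro d d' x
    rw [abs_mul]
    exact mul_le_mul (hBφ d d' x) (hcB x) (abs_nonneg _) hBφ0
  -- the integrand function g for G¹
  set g : ℝ × ℝ → ℝ := fun x => φ true true x * c x - φ false true x * c x with hgdef
  have hg0 : ∀ x : ℝ × ℝ, x ∉ Ioo (0:ℝ) 1 ×ˢ Ioo (0:ℝ) 1 → g x = 0 := fun x hx => by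
    simp only [hgdef, hf0 true true x hx, hf0 false true x hx, sub_zero]
  have hgc : ContinuousOn g (Ioo (0:ℝ) 1 ×ˢ Ioo (0:ℝ) 1) :=
    (hfc true true).sub (hfc false true)
  have hgm : Measurable g := (hfm true true).sub (hfm false true)
  have hgb : ∀ x, |g x| ≤ Bφ * max Bc 0 + Bφ * max Bc 0 := fun x => by
    simpa [Real.norm_eq_abs] using
      le_trans (norm_sub_le (φ true true x * c x) (φ false true x * c x))
        (add_le_add ((Real.norm_eq_abs _) ▸ hfb true true x)
          ((Real.norm_eq_abs _) ▸ hfb false true x))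
  -- identified form of C
  have key_C : ∀ p ∈ Ioo (0:ℝ) 1, ∀ q ∈ Ioo (0:ℝ) 1,
      C p q = ∫ x in Ioc (0:ℝ) p ×ˢ Ioc (0:ℝ) q, c x := by
    intro p hp q hq
    rw [hC]
    have hpre : {ω | V₀ ω ≤ p ∧ V₁ ω ≤ q}
        = (fun ω => (V₀ ω, V₁ ω)) ⁻¹' (Iic p ×ˢ Iic q) := by
      ext ω; simp [Set.mem_prod]
    have hmap : μ {ω | V₀ ω ≤ p ∧ V₁ ω ≤ q}
        = ∫⁻ x in Iic p ×ˢ Iic q, ENNReal.ofReal (c x) := by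
      rw [hpre, ← Measure.map_apply (hV₀.prodMk hV₁)
          (measurableSet_Iic.prod measurableSet_Iic), hc_density,
        withDensity_apply _ (measurableSet_Iic.prod measurableSet_Iic)]
    have hsets : (∫⁻ x in Iic p ×ˢ Iic q, ENNReal.ofReal (c x))
        = ∫⁻ x in Ioc (0:ℝ) p ×ˢ Ioc (0:ℝ) q, ENNReal.ofReal (c x) := by
      rw [← lintegral_indicator (measurableSet_Iic.prod measurableSet_Iic),
        ← lintegral_indicator (measurableSet_Ioc.prod measurableSet_Ioc)]
      congr 1
      funext x
      by_cases h1 : x ∈ Ioc (0:ℝ) p ×ˢ Ioc (0:ℝ) q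
      · have h2 : x ∈ Iic p ×ˢ Iic q := ⟨h1.1.2, h1.2.2⟩
        rw [Set.indicator_of_mem h2, Set.indicator_of_mem h1]
      · by_cases h2 : x ∈ Iic p ×ˢ Iic q
        · have hx : x ∉ Ioo (0:ℝ) 1 ×ˢ Ioo (0:ℝ) 1 := by
            intro hx
            exact h1 ⟨⟨hx.1.1, h2.1⟩, ⟨hx.2.1, h2.2⟩⟩
          rw [Set.indicator_of_mem h2, Set.indicator_of_notMem h1, hc_supp x hx,
            ENNReal.ofReal_zero]
        · rw [Set.indicator_of_notMem h1, Set.indicator_of_notMem h2]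
    rw [hmap, hsets,
      MeasureTheory.integral_eq_lintegral_of_nonneg_ae
        (Filter.Eventually.of_forall fun x => hc_nonneg x)
        hc_meas.aestronglyMeasurable.restrict]
  -- a.e. V₀ ∈ (0,1)
  have haeV₀ : ∀ᵐ ω ∂μ, V₀ ω ∈ Ioo (0:ℝ) 1 := by
    have hms : MeasurableSet (V₀ ⁻¹' Ioo (0:ℝ) 1) := hV₀ measurableSet_Ioo
    have h1 : μ (V₀ ⁻¹' Ioo (0:ℝ) 1) = 1 := by
      rw [← Measure.map_apply hV₀ measurableSet_Ioo, hV₀unif,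
        Measure.restrict_apply measurableSet_Ioo, Set.inter_self, Real.volume_Ioo]
      norm_num
    rw [ae_iff]
    have : {ω | ¬ V₀ ω ∈ Ioo (0:ℝ) 1} = (V₀ ⁻¹' Ioo (0:ℝ) 1)ᶜ := rfl
    rw [this, measure_compl hms (measure_ne_top μ _), h1, measure_univ, tsub_self]
  -- integrability of the ω-integrands
  have hIm : ∀ (d d' : Bool) (r s : ℝ),
      Integrable (fun ω => m d d' (U ω) * (if V₀ ω ≤ r then (1:ℝ) else 0)
        * (if V₁ ω ≤ s then (1:ℝ) else 0)) μ := by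
    intro d d' r s
    have hmeas : Measurable (fun ω => m d d' (U ω) * (if V₀ ω ≤ r then (1:ℝ) else 0)
        * (if V₁ ω ≤ s then (1:ℝ) else 0)) :=
      (((hm d d').comp hU).mul
        (Measurable.ite (hV₀ measurableSet_Iic) measurable_const measurable_const)).mul
        (Measurable.ite (hV₁ measurableSet_Iic) measurable_const measurable_const)
    refine (integrable_const Bm).mono' hmeas.aestronglyMeasurable
      (Filter.Eventually.of_forall fun ω => ?_)
    have h0 : 0 ≤ Bm := le_trans (abs_nonneg _) (hBm d d' (U ω))
    have h1 : |m d d' (U ω)| ≤ Bm := hBm d d' (U ω)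
    rw [Real.norm_eq_abs, abs_mul, abs_mul]
    split_ifs <;> simp <;> [exact h1; exact h0; exact h0; exact h0]
  have hIm' : ∀ (r s : ℝ),
      Integrable (fun ω => m false true (U ω) * (if r < V₀ ω then (1:ℝ) else 0)
        * (if V₁ ω ≤ s then (1:ℝ) else 0)) μ := by
    intro r s
    have hmeas : Measurable (fun ω => m false true (U ω) * (if r < V₀ ω then (1:ℝ) else 0)
        * (if V₁ ω ≤ s then (1:ℝ) else 0)) :=
      (((hm false true).comp hU).mul
        (Measurable.ite (hV₀ measurableSet_Ioi) measurable_const measurable_const)).mul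
        (Measurable.ite (hV₁ measurableSet_Iic) measurable_const measurable_const)
    refine (integrable_const Bm).mono' hmeas.aestronglyMeasurable
      (Filter.Eventually.of_forall fun ω => ?_)
    have h0 : 0 ≤ Bm := le_trans (abs_nonneg _) (hBm false true (U ω))
    have h1 : |m false true (U ω)| ≤ Bm := hBm false true (U ω)
    rw [Real.norm_eq_abs, abs_mul, abs_mul]
    split_ifs <;> simp <;> [exact h1; exact h0; exact h0; exact h0]
  -- integrability on product boxes
  have hIntOn : ∀ (f : ℝ × ℝ → ℝ), Measurable f → ∀ (M : ℝ), (∀ x, |f x| ≤ M) →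
      ∀ r s : ℝ, IntegrableOn f (Ioc (0:ℝ) r ×ˢ Ioc (0:ℝ) s) := by
    intro f hf M hMf r s
    rw [IntegrableOn, Measure.volume_eq_prod, ← Measure.prod_restrict]
    exact aux_int_prod f hf M hMf r s
  -- identified form of G1
  have key_G : ∀ p ∈ Ioo (0:ℝ) 1, ∀ q ∈ Ioo (0:ℝ) 1,
      G1 p q = (∫ x in Ioc (0:ℝ) p ×ˢ Ioc (0:ℝ) q, g x)
        + ∫ x in Ioc (0:ℝ) 1 ×ˢ Ioc (0:ℝ) q, φ false true x * c x := by
    intro p hp q hq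
    have hpI : p ∈ Set.Ioc (0:ℝ) 1 := ⟨hp.1, hp.2.le⟩
    have hqI : q ∈ Set.Ioc (0:ℝ) 1 := ⟨hq.1, hq.2.le⟩
    have h1I : (1:ℝ) ∈ Set.Ioc (0:ℝ) 1 := ⟨one_pos, le_refl 1⟩
    rw [hG1]
    have hsplit : (∫ ω, m false true (U ω) * (if p < V₀ ω then (1:ℝ) else 0)
          * (if V₁ ω ≤ q then (1:ℝ) else 0) ∂μ)
        = (∫ ω, m false true (U ω) * (if V₀ ω ≤ 1 then (1:ℝ) else 0)
            * (if V₁ ω ≤ q then (1:ℝ) else 0) ∂μ)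
          - ∫ ω, m false true (U ω) * (if V₀ ω ≤ p then (1:ℝ) else 0)
            * (if V₁ ω ≤ q then (1:ℝ) else 0) ∂μ := by
      rw [← integral_sub (hIm false true 1 q) (hIm false true p q)]
      refine integral_congr_ae ?_
      filter_upwards [haeV₀] with ω hω
      have hle1 : V₀ ω ≤ 1 := hω.2.le
      by_cases hpv : p < V₀ ω
      · have h2 : ¬ V₀ ω ≤ p := not_le.mpr hpv
        simp only [hpv, h2, hle1, if_true, if_false]
        ring
      · have h2 : V₀ ω ≤ p := not_lt.mp hpv
        simp only [hpv, h2, hle1, if_true, if_false]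
        ring
    rw [hsplit, hφ_disint true true p hpI q hqI, hφ_disint false true 1 h1I q hqI,
      hφ_disint false true p hpI q hqI]
    have hsub : (∫ x in Ioc (0:ℝ) p ×ˢ Ioc (0:ℝ) q, g x)
        = (∫ x in Ioc (0:ℝ) p ×ˢ Ioc (0:ℝ) q, φ true true x * c x)
          - ∫ x in Ioc (0:ℝ) p ×ˢ Ioc (0:ℝ) q, φ false true x * c x := by
      rw [← integral_sub (hIntOn _ (hfm true true) _ (hfb true true) p q)
        (hIntOn _ (hfm false true) _ (hfb false true) p q)]
    rw [hsub]
    ring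
  -- assemble
  refine ⟨g (p₀, p₁), c (p₀, p₁), ?_, ?_, ?_, rfl, ?_, ?_⟩
  · refine ⟨fun p => (∫ u in (0:ℝ)..p, g (u, p₁))
      + ∫ u in Ioc (0:ℝ) 1, φ false true (u, p₁) * c (u, p₁), ?_, ?_⟩
    · filter_upwards [isOpen_Ioo.mem_nhds hp₀] with p hp
      have h1 := aux_qderiv g hgm _ hgb hg0 hgc p₁ hp₁ p hp.1.le
      have h2 := aux_qderiv (fun x => φ false true x * c x) (hfm false true) _
        (hfb false true) (hf0 false true) (hfc false true) p₁ hp₁ 1 zero_le_one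
      have h3 := h1.add h2
      rw [intervalIntegral.integral_of_le hp.1.le]
      refine h3.congr_of_eventuallyEq ?_
      filter_upwards [isOpen_Ioo.mem_nhds hp₁] with q hq
      exact key_G p hp q hq
    · exact (aux_pderiv g hgm _ hgb hgc p₀ p₁ hp₀ hp₁).add_const _
  · refine ⟨fun p => ∫ u in (0:ℝ)..p, c (u, p₁), ?_, ?_⟩
    · filter_upwards [isOpen_Ioo.mem_nhds hp₀] with p hp
      have h1 := aux_qderiv c hc_meas _ hcB hc_supp hc_cont p₁ hp₁ p hp.1.le
      rw [intervalIntegral.integral_of_le hp.1.le]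
      refine h1.congr_of_eventuallyEq ?_
      filter_upwards [isOpen_Ioo.mem_nhds hp₁] with q hq
      exact key_C p hp q hq
    · exact aux_pderiv c hc_meas _ hcB hc_cont p₀ p₁ hp₀ hp₁
  · simp only [hgdef]; ring
  · exact lt_of_lt_of_le hε (hεle (p₀, p₁) ⟨hp₀, hp₁⟩)
  · have hBne : c (p₀, p₁) ≠ 0 := ne_of_gt (lt_of_lt_of_le hε (hεle (p₀, p₁) ⟨hp₀, hp₁⟩))
    rw [div_eq_iff hBne]
    simp only [hgdef]
    ring
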